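/- Let φ ∈ C²(ℝ², ℝ) with φ(0) = 0, |∇φ(0)| = 0 and Lip(φ) ≤ 1, and let Q : Ω_φ → SO(3) be the associated rotation field. Then sup{|∂Q_{ij}(x)/∂x^k| : i,j,k ∈ {1,2,3}, x ∈ Ω_φ} ≤ 6 ‖φ‖_{C²}, where ‖φ‖_{C²} = max_{|α|=2} sup_{x∈ℝ²} |∂^α φ(x)|. -/

import Mathlib

/-!
Statement 10 (Lemma `lem: bound on dQ/dx`): for the rotation field `Q` built from `φ`,
`sup{|∂Q_{ij}(x)/∂x^k| : i,j,k, x ∈ Ω_φ} ≤ 6 ‖φ‖_{C²}`.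
-/

open MeasureTheory Metric Set
open scoped RealInnerProductSpace Topology

noncomputable section

abbrev E2 := EuclideanSpace ℝ (Fin 2)
abbrev E3 := EuclideanSpace ℝ (Fin 3)

/-- The open cylinder `C(a,r)`. -/
def cyl (a : E3) (r : ℝ) : Set E3 :=
  {y | Real.sqrt ((y 0 - a 0) ^ 2 + (y 1 - a 1) ^ 2) < r ∧ |y 2 - a 2| < r}

def proj2 (x : E3) : E2 := (WithLp.equiv 2 (Fin 2 → ℝ)).symm ![x 0, x 1]

/-- `Ω_φ = {x ∈ C(0,1) : x³ < φ(x¹,x²)}`. -/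
def Ωset (φ : E2 → ℝ) : Set E3 := {x ∈ cyl 0 1 | x 2 < φ (proj2 x)}

/-- `Lip(φ) = ‖∇φ‖_{L^∞}`. -/
def lipC (φ : E2 → ℝ) : ℝ := ⨆ x : E2, ‖fderiv ℝ φ x‖

/-- The partial derivatives `φ_{x¹}, φ_{x²}`. -/
def dφ (φ : E2 → ℝ) (p : E2) (i : Fin 2) : ℝ := fderiv ℝ φ p (EuclideanSpace.single i 1)

/-- The rotation `Q` about the axis `ν × (0,0,1)` through the angle `τ` with
`cos τ = ν·(0,0,1) = (φ_{x¹}² + φ_{x²}² + 1)^{−1/2}`, given by its explicit matrix; at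
points where `∇φ = 0` (where the formula has a removable singularity) it is the identity. -/
def Qmat (φ : E2 → ℝ) (p : E2) : Matrix (Fin 3) (Fin 3) ℝ :=
  let a := dφ φ p 0
  let b := dφ φ p 1
  if a ^ 2 + b ^ 2 = 0 then 1 else
    let ct := (Real.sqrt (a ^ 2 + b ^ 2 + 1))⁻¹
    let st := Real.sqrt ((a ^ 2 + b ^ 2) / (a ^ 2 + b ^ 2 + 1))
    Matrix.of
      ![![(b ^ 2 + a ^ 2 * ct) / (a ^ 2 + b ^ 2),
          -(a * b * (1 - ct)) / (a ^ 2 + b ^ 2),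
          a * st / Real.sqrt (a ^ 2 + b ^ 2)],
        ![-(a * b * (1 - ct)) / (a ^ 2 + b ^ 2),
          (a ^ 2 + b ^ 2 * ct) / (a ^ 2 + b ^ 2),
          b * st / Real.sqrt (a ^ 2 + b ^ 2)],
        ![-(a * st) / Real.sqrt (a ^ 2 + b ^ 2),
          -(b * st) / Real.sqrt (a ^ 2 + b ^ 2),
          ct]]

/-- `‖φ‖_{C²} = max_{|α|=2} sup_{x∈ℝ²} |∂^α φ(x)|`. -/
def c2C (φ : E2 → ℝ) : ℝ :=
  ⨆ x : E2, ⨆ i : Fin 2, ⨆ j : Fin 2,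
    |fderiv ℝ (fderiv ℝ φ) x (EuclideanSpace.single i 1) (EuclideanSpace.single j 1)|

namespace Stmt10Aux

/- ### Linear maps `ℝ × ℝ →L[ℝ] ℝ` given by a pair of coefficients -/

def lin (α β : ℝ) : ℝ × ℝ →L[ℝ] ℝ :=
  α • ContinuousLinearMap.fst ℝ ℝ ℝ + β • ContinuousLinearMap.snd ℝ ℝ ℝ

@[simp] lemma lin_apply (α β : ℝ) (v : ℝ × ℝ) : lin α β v = α * v.1 + β * v.2 := by
  simp [lin, smul_eq_mul]

lemma pair_bound (L : ℝ × ℝ →L[ℝ] ℝ) (v : ℝ × ℝ) :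
    |L v| ≤ (|L (1, 0)| + |L (0, 1)|) * ‖v‖ := by
  have hv : v = v.1 • ((1:ℝ), (0:ℝ)) + v.2 • ((0:ℝ), (1:ℝ)) := by
    ext <;> simp
  have h1 : |v.1| ≤ ‖v‖ := by simpa [Real.norm_eq_abs] using norm_fst_le v
  have h2 : |v.2| ≤ ‖v‖ := by simpa [Real.norm_eq_abs] using norm_snd_le v
  calc |L v| = |v.1 * L (1,0) + v.2 * L (0,1)| := by
        conv_lhs => rw [hv]
        rw [map_add, _root_.map_smul, _root_.map_smul]; simp [smul_eq_mul]
    _ ≤ |v.1| * |L (1,0)| + |v.2| * |L (0,1)| := by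
        refine (abs_add_le _ _).trans ?_; rw [abs_mul, abs_mul]
    _ ≤ ‖v‖ * |L (1,0)| + ‖v‖ * |L (0,1)| := by gcongr
    _ = (|L (1,0)| + |L (0,1)|) * ‖v‖ := by ring

/- ### The smooth model for the matrix entries -/

def cfun (w : ℝ × ℝ) : ℝ := (Real.sqrt (w.1 ^ 2 + w.2 ^ 2 + 1))⁻¹
def gfun (w : ℝ × ℝ) : ℝ := (w.1 ^ 2 + w.2 ^ 2 + 1 + Real.sqrt (w.1 ^ 2 + w.2 ^ 2 + 1))⁻¹

def Fmat (w : ℝ × ℝ) : Matrix (Fin 3) (Fin 3) ℝ :=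
  Matrix.of
    ![![1 - w.1 ^ 2 * gfun w, -(w.1 * w.2 * gfun w), w.1 * cfun w],
      ![-(w.1 * w.2 * gfun w), 1 - w.2 ^ 2 * gfun w, w.2 * cfun w],
      ![-(w.1 * cfun w), -(w.2 * cfun w), cfun w]]

/- ### Algebraic identities -/

lemma id1 (a b s : ℝ) (hr : 0 < a^2+b^2) (hs1 : 1 ≤ s) (hs2 : s^2 = a^2+b^2+1) :
    (b^2 + a^2 * s⁻¹)/(a^2+b^2) = 1 - a^2 * (a^2+b^2+1+s)⁻¹ := by
  have hs0 : (0:ℝ) < s := by linarith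
  have hb2 : b^2 = s^2 - 1 - a^2 := by nlinarith
  rw [hb2]
  have h1 : a ^ 2 + (s ^ 2 - 1 - a ^ 2) ≠ 0 := by intro h; nlinarith
  have h2 : a ^ 2 + (s ^ 2 - 1 - a ^ 2) + 1 + s ≠ 0 := by intro h; nlinarith
  have h3 : -s + s ^ 3 ≠ 0 := by intro h; nlinarith
  have h4 : s ^ 2 - 1 ≠ 0 := by intro h; nlinarith
  field_simp
  ring

lemma id2 (a b s : ℝ) (hr : 0 < a^2+b^2) (hs1 : 1 ≤ s) (hs2 : s^2 = a^2+b^2+1) :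
    -(a * b * (1 - s⁻¹))/(a^2+b^2) = -(a * b * (a^2+b^2+1+s)⁻¹) := by
  have hs0 : (0:ℝ) < s := by linarith
  have hb2 : b^2 = s^2 - 1 - a^2 := by nlinarith
  rw [hb2]
  have h1 : a ^ 2 + (s ^ 2 - 1 - a ^ 2) ≠ 0 := by intro h; nlinarith
  have h2 : a ^ 2 + (s ^ 2 - 1 - a ^ 2) + 1 + s ≠ 0 := by intro h; nlinarith
  have h3 : -s + s ^ 3 ≠ 0 := by intro h; nlinarith
  have h4 : s ^ 2 - 1 ≠ 0 := by intro h; nlinarith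
  field_simp
  ring

lemma id3 (a b s : ℝ) (hr : 0 < a^2+b^2) (hs1 : 1 ≤ s) (hs2 : s^2 = a^2+b^2+1) :
    (a^2 + b^2 * s⁻¹)/(a^2+b^2) = 1 - b^2 * (a^2+b^2+1+s)⁻¹ := by
  have hs0 : (0:ℝ) < s := by linarith
  have hb2 : b^2 = s^2 - 1 - a^2 := by nlinarith
  rw [hb2]
  have h1 : a ^ 2 + (s ^ 2 - 1 - a ^ 2) ≠ 0 := by intro h; nlinarith
  have h2 : a ^ 2 + (s ^ 2 - 1 - a ^ 2) + 1 + s ≠ 0 := by intro h; nlinarith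
  have h3 : -s + s ^ 3 ≠ 0 := by intro h; nlinarith
  have h4 : s ^ 2 - 1 ≠ 0 := by intro h; nlinarith
  field_simp
  ring

lemma id4 (c a b s : ℝ) (hr : 0 < a^2+b^2) (hs1 : 1 ≤ s)
    (hs : s = Real.sqrt (a^2+b^2+1)) :
    c * Real.sqrt ((a^2+b^2)/(a^2+b^2+1)) / Real.sqrt (a^2+b^2) = c * s⁻¹ := by
  have hs0 : (0:ℝ) < s := by linarith
  have hrs : 0 < Real.sqrt (a^2+b^2) := Real.sqrt_pos.mpr hr
  rw [Real.sqrt_div (by positivity), ← hs]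
  field_simp

/- ### `Qmat` agrees with the smooth model -/

lemma Qmat_eq (φ : E2 → ℝ) (p : E2) :
    Qmat φ p = Fmat (dφ φ p 0, dφ φ p 1) := by
  set a := dφ φ p 0 with hadef
  set b := dφ φ p 1 with hbdef
  rcases eq_or_ne (a ^ 2 + b ^ 2) 0 with h | h
  · have ha : a = 0 := by nlinarith [sq_nonneg a, sq_nonneg b]
    have hb : b = 0 := by nlinarith [sq_nonneg a, sq_nonneg b]
    simp only [Qmat, ← hadef, ← hbdef, if_pos h]
    ext i j
    rcases (show i = 0 ∨ i = 1 ∨ i = 2 by omega) with rfl | rfl | rfl <;>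
      rcases (show j = 0 ∨ j = 1 ∨ j = 2 by omega) with rfl | rfl | rfl <;>
      simp [Fmat, cfun, gfun, ha, hb, Matrix.one_apply, Matrix.vecHead, Matrix.vecTail] <;>
      norm_num
  · simp only [Qmat, ← hadef, ← hbdef, if_neg h]
    have hr : 0 < a ^ 2 + b ^ 2 := lt_of_le_of_ne (by positivity) (Ne.symm h)
    set s := Real.sqrt (a ^ 2 + b ^ 2 + 1) with hs
    have hs2 : s ^ 2 = a ^ 2 + b ^ 2 + 1 := Real.sq_sqrt (by positivity)
    have hs1 : 1 ≤ s := by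
      rw [hs]; exact Real.one_le_sqrt.mpr (by nlinarith [sq_nonneg a, sq_nonneg b])
    ext i j
    rcases (show i = 0 ∨ i = 1 ∨ i = 2 by omega) with rfl | rfl | rfl <;>
      rcases (show j = 0 ∨ j = 1 ∨ j = 2 by omega) with rfl | rfl | rfl
    · show (b ^ 2 + a ^ 2 * s⁻¹) / (a ^ 2 + b ^ 2) = 1 - a ^ 2 * gfun (a, b)
      rw [gfun]; simp only [← hs]
      exact id1 a b s hr hs1 hs2
    · show -(a * b * (1 - s⁻¹)) / (a ^ 2 + b ^ 2) = -(a * b * gfun (a, b))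
      rw [gfun]; simp only [← hs]
      exact id2 a b s hr hs1 hs2
    · show a * Real.sqrt ((a ^ 2 + b ^ 2) / (a ^ 2 + b ^ 2 + 1)) / Real.sqrt (a ^ 2 + b ^ 2)
        = a * cfun (a, b)
      rw [cfun]; simp only [← hs]
      exact id4 a a b s hr hs1 hs
    · show -(a * b * (1 - s⁻¹)) / (a ^ 2 + b ^ 2) = -(a * b * gfun (a, b))
      rw [gfun]; simp only [← hs]
      exact id2 a b s hr hs1 hs2
    · show (a ^ 2 + b ^ 2 * s⁻¹) / (a ^ 2 + b ^ 2) = 1 - b ^ 2 * gfun (a, b)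
      rw [gfun]; simp only [← hs]
      exact id3 a b s hr hs1 hs2
    · show b * Real.sqrt ((a ^ 2 + b ^ 2) / (a ^ 2 + b ^ 2 + 1)) / Real.sqrt (a ^ 2 + b ^ 2)
        = b * cfun (a, b)
      rw [cfun]; simp only [← hs]
      exact id4 b a b s hr hs1 hs
    · show -(a * Real.sqrt ((a ^ 2 + b ^ 2) / (a ^ 2 + b ^ 2 + 1))) / Real.sqrt (a ^ 2 + b ^ 2)
        = -(a * cfun (a, b))
      rw [cfun]; simp only [← hs]
      rw [neg_div]
      rw [id4 a a b s hr hs1 hs]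
    · show -(b * Real.sqrt ((a ^ 2 + b ^ 2) / (a ^ 2 + b ^ 2 + 1))) / Real.sqrt (a ^ 2 + b ^ 2)
        = -(b * cfun (a, b))
      rw [cfun]; simp only [← hs]
      rw [neg_div]
      rw [id4 b a b s hr hs1 hs]
    · show s⁻¹ = cfun (a, b)
      rw [cfun]

lemma hfd_congr {f : ℝ × ℝ → ℝ} {L L' : ℝ × ℝ →L[ℝ] ℝ} {u : ℝ × ℝ}
    (h : HasFDerivAt f L u) (e : L = L') : HasFDerivAt f L' u := e ▸ h

lemma hq' (u : ℝ × ℝ) :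
    HasFDerivAt (fun w : ℝ × ℝ => w.1 ^ 2 + w.2 ^ 2 + 1) (lin (2 * u.1) (2 * u.2)) u := by
  have h1 : HasFDerivAt (fun w : ℝ × ℝ => w.1 ^ 2)
      (((2 : ℕ) * u.1 ^ 1 : ℝ) • ContinuousLinearMap.fst ℝ ℝ ℝ) u :=
    (hasDerivAt_pow 2 u.1).comp_hasFDerivAt u hasFDerivAt_fst
  have h2 : HasFDerivAt (fun w : ℝ × ℝ => w.2 ^ 2)
      (((2 : ℕ) * u.2 ^ 1 : ℝ) • ContinuousLinearMap.snd ℝ ℝ ℝ) u :=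
    (hasDerivAt_pow 2 u.2).comp_hasFDerivAt u hasFDerivAt_snd
  refine hfd_congr ((h1.add h2).add_const 1) ?_
  refine ContinuousLinearMap.ext fun v => ?_
  simp [lin, smul_eq_mul]

lemma hS' (u : ℝ × ℝ) (S : ℝ) (hS : S = Real.sqrt (u.1 ^ 2 + u.2 ^ 2 + 1)) (hS0 : 0 < S) :
    HasFDerivAt (fun w : ℝ × ℝ => Real.sqrt (w.1 ^ 2 + w.2 ^ 2 + 1))
      (lin (u.1 / S) (u.2 / S)) u := by
  have hq0 : u.1 ^ 2 + u.2 ^ 2 + 1 ≠ 0 := by positivity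
  refine hfd_congr ((hq' u).sqrt hq0) ?_
  refine ContinuousLinearMap.ext fun v => ?_
  simp [lin, smul_eq_mul, ← hS]
  field_simp

lemma hc' (u : ℝ × ℝ) (S : ℝ) (hS : S = Real.sqrt (u.1 ^ 2 + u.2 ^ 2 + 1)) (hS0 : 0 < S) :
    HasFDerivAt cfun (lin (-(u.1 / S ^ 3)) (-(u.2 / S ^ 3))) u := by
  have hS0' : Real.sqrt (u.1 ^ 2 + u.2 ^ 2 + 1) ≠ 0 := by rw [← hS]; exact hS0.ne'
  have h := (hasDerivAt_inv hS0').comp_hasFDerivAt u (hS' u S hS hS0)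
  refine hfd_congr h ?_
  refine ContinuousLinearMap.ext fun v => ?_
  simp [lin, smul_eq_mul, ← hS]
  field_simp

lemma hg' (u : ℝ × ℝ) (S : ℝ) (hS : S = Real.sqrt (u.1 ^ 2 + u.2 ^ 2 + 1)) (hS0 : 0 < S) :
    HasFDerivAt gfun
      (lin (-((2 * u.1 + u.1 / S) / (u.1 ^ 2 + u.2 ^ 2 + 1 + S) ^ 2))
           (-((2 * u.2 + u.2 / S) / (u.1 ^ 2 + u.2 ^ 2 + 1 + S) ^ 2))) u := by
  have hq1 : (1:ℝ) ≤ u.1 ^ 2 + u.2 ^ 2 + 1 := by nlinarith [sq_nonneg u.1, sq_nonneg u.2]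
  have hne : u.1 ^ 2 + u.2 ^ 2 + 1 + Real.sqrt (u.1 ^ 2 + u.2 ^ 2 + 1) ≠ 0 := by
    rw [← hS]; nlinarith
  have h := (hasDerivAt_inv hne).comp_hasFDerivAt u ((hq' u).add (hS' u S hS hS0))
  refine hfd_congr h ?_
  refine ContinuousLinearMap.ext fun v => ?_
  rw [← hS] at hne
  simp [lin, smul_eq_mul, ← hS]
  field_simp

lemma abs_mul_le {x y c d : ℝ} (hx : |x| ≤ c) (hy : |y| ≤ d) : |x * y| ≤ c * d := by
  rw [abs_mul]; exact mul_le_mul hx hy (abs_nonneg _) ((abs_nonneg x).trans hx)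

lemma abs_add_le {x y c d : ℝ} (hx : |x| ≤ c) (hy : |y| ≤ d) : |x + y| ≤ c + d :=
  (_root_.abs_add_le _ _).trans (add_le_add hx hy)

set_option maxHeartbeats 2000000 in
lemma key (u : ℝ × ℝ) (h1 : |u.1| ≤ 1) (h2 : |u.2| ≤ 1) (i j : Fin 3) :
    ∃ L : ℝ × ℝ →L[ℝ] ℝ, HasFDerivAt (fun w => Fmat w i j) L u ∧
      |L (1, 0)| + |L (0, 1)| ≤ 6 := by
  set A := u.1 with hA
  set B := u.2 with hB
  have hq1 : 1 ≤ A ^ 2 + B ^ 2 + 1 := by nlinarith [sq_nonneg A, sq_nonneg B]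
  set S : ℝ := Real.sqrt (A ^ 2 + B ^ 2 + 1) with hS
  have hSq : S ^ 2 = A ^ 2 + B ^ 2 + 1 := Real.sq_sqrt (by positivity)
  have hS1 : 1 ≤ S := by rw [hS]; exact Real.one_le_sqrt.mpr hq1
  have hS0 : 0 < S := lt_of_lt_of_le one_pos hS1
  set C : ℝ := cfun u with hC
  set G : ℝ := gfun u with hG
  set cA : ℝ := -(A / S ^ 3) with hcA
  set cB : ℝ := -(B / S ^ 3) with hcB
  set gA : ℝ := -((2 * A + A / S) / (A ^ 2 + B ^ 2 + 1 + S) ^ 2) with hgA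
  set gB : ℝ := -((2 * B + B / S) / (A ^ 2 + B ^ 2 + 1 + S) ^ 2) with hgB
  -- numeric bounds
  have hCb : |C| ≤ 1 := by
    rw [hC, cfun, abs_inv, ← hS, abs_of_pos hS0, inv_le_one_iff₀]
    right; exact hS1
  have hGb : |G| ≤ 1 / 2 := by
    have h2' : (2 : ℝ) ≤ A ^ 2 + B ^ 2 + 1 + S := by linarith
    rw [hG, gfun, ← hS, abs_inv, abs_of_pos (by linarith)]
    rw [inv_le_comm₀ (by linarith) (by norm_num)]
    linarith
  have hS3 : 1 ≤ S ^ 3 := one_le_pow₀ hS1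
  have hcAb : |cA| ≤ 1 := by
    rw [hcA, abs_neg, abs_div, abs_of_pos (show (0:ℝ) < S ^ 3 by positivity),
      div_le_one (by positivity)]
    exact h1.trans hS3
  have hcBb : |cB| ≤ 1 := by
    rw [hcB, abs_neg, abs_div, abs_of_pos (show (0:ℝ) < S ^ 3 by positivity),
      div_le_one (by positivity)]
    exact h2.trans hS3
  have hden : 4 ≤ (A ^ 2 + B ^ 2 + 1 + S) ^ 2 := by nlinarith
  have hnum1 : |2 * A + A / S| ≤ 3 := by
    have e1 : |2 * A| ≤ 2 := by rw [abs_mul, abs_two]; linarith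
    have e2 : |A / S| ≤ 1 := by
      rw [abs_div, abs_of_pos hS0, div_le_one hS0]; exact h1.trans hS1
    calc |2 * A + A / S| ≤ |2 * A| + |A / S| := _root_.abs_add_le _ _
      _ ≤ 3 := by linarith
  have hnum2 : |2 * B + B / S| ≤ 3 := by
    have e1 : |2 * B| ≤ 2 := by rw [abs_mul, abs_two]; linarith
    have e2 : |B / S| ≤ 1 := by
      rw [abs_div, abs_of_pos hS0, div_le_one hS0]; exact h2.trans hS1
    calc |2 * B + B / S| ≤ |2 * B| + |B / S| := _root_.abs_add_le _ _
      _ ≤ 3 := by linarith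
  have hgAb : |gA| ≤ 3 / 4 := by
    rw [hgA, abs_neg, abs_div,
      abs_of_pos (show (0:ℝ) < (A ^ 2 + B ^ 2 + 1 + S) ^ 2 by positivity)]
    exact div_le_div₀ (by norm_num) hnum1 (by norm_num) hden
  have hgBb : |gB| ≤ 3 / 4 := by
    rw [hgB, abs_neg, abs_div,
      abs_of_pos (show (0:ℝ) < (A ^ 2 + B ^ 2 + 1 + S) ^ 2 by positivity)]
    exact div_le_div₀ (by norm_num) hnum2 (by norm_num) hden
  have hA2 : |A ^ 2| ≤ 1 := by rw [abs_pow]; nlinarith [abs_nonneg A]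
  have hB2 : |B ^ 2| ≤ 1 := by rw [abs_pow]; nlinarith [abs_nonneg B]
  have h2A : |2 * A| ≤ 2 := by rw [abs_mul, abs_two]; linarith
  have h2B : |2 * B| ≤ 2 := by rw [abs_mul, abs_two]; linarith
  have hAB : |A * B| ≤ 1 := by have := abs_mul_le h1 h2; linarith
  -- derivatives of the building blocks
  have hfst : HasFDerivAt (fun w : ℝ × ℝ => w.1) (lin 1 0) u := by
    refine hfd_congr hasFDerivAt_fst ?_
    exact ContinuousLinearMap.ext fun v => by simp [lin]
  have hsnd : HasFDerivAt (fun w : ℝ × ℝ => w.2) (lin 0 1) u := by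
    refine hfd_congr hasFDerivAt_snd ?_
    exact ContinuousLinearMap.ext fun v => by simp [lin]
  have hsq1 : HasFDerivAt (fun w : ℝ × ℝ => w.1 ^ 2) (lin (2 * A) 0) u := by
    have hp1 : HasFDerivAt (fun w : ℝ × ℝ => w.1 ^ 2)
        (((2 : ℕ) * A ^ 1 : ℝ) • ContinuousLinearMap.fst ℝ ℝ ℝ) u :=
      (hasDerivAt_pow 2 u.1).comp_hasFDerivAt u hasFDerivAt_fst
    refine hfd_congr hp1 ?_
    refine ContinuousLinearMap.ext fun v => ?_
    simp [lin, smul_eq_mul]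
  have hsq2 : HasFDerivAt (fun w : ℝ × ℝ => w.2 ^ 2) (lin 0 (2 * B)) u := by
    have hp2 : HasFDerivAt (fun w : ℝ × ℝ => w.2 ^ 2)
        (((2 : ℕ) * B ^ 1 : ℝ) • ContinuousLinearMap.snd ℝ ℝ ℝ) u :=
      (hasDerivAt_pow 2 u.2).comp_hasFDerivAt u hasFDerivAt_snd
    refine hfd_congr hp2 ?_
    refine ContinuousLinearMap.ext fun v => ?_
    simp [lin, smul_eq_mul]
  have hc : HasFDerivAt cfun (lin cA cB) u := hc' u S hS hS0
  have hg : HasFDerivAt gfun (lin gA gB) u := hg' u S hS hS0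
  rcases (show i = 0 ∨ i = 1 ∨ i = 2 by omega) with rfl | rfl | rfl <;>
    rcases (show j = 0 ∨ j = 1 ∨ j = 2 by omega) with rfl | rfl | rfl
  · -- (0,0) : 1 - w.1^2 * gfun w
    refine ⟨lin (-(A ^ 2 * gA + 2 * A * G)) (-(A ^ 2 * gB)), ?_, ?_⟩
    · refine hfd_congr ((hasFDerivAt_const (1:ℝ) u).sub (hsq1.mul hg)) ?_
      refine ContinuousLinearMap.ext fun v => ?_
      simp [lin, smul_eq_mul, ← hG]; ring
    · have e1 : |(-(A ^ 2 * gA + 2 * A * G))| ≤ 1 * (3/4) + 2 * (1/2) := by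
        rw [abs_neg]; exact abs_add_le (abs_mul_le hA2 hgAb) (abs_mul_le h2A hGb)
      have e2 : |(-(A ^ 2 * gB))| ≤ 1 * (3/4) := by
        rw [abs_neg]; exact abs_mul_le hA2 hgBb
      simp only [lin_apply, mul_one, mul_zero, add_zero, zero_add]
      linarith
  · -- (0,1) : -(w.1 * w.2 * gfun w)
    refine ⟨lin (-(A * B * gA + B * G)) (-(A * B * gB + A * G)), ?_, ?_⟩
    · refine hfd_congr ((hfst.mul hsnd).mul hg).neg ?_
      refine ContinuousLinearMap.ext fun v => ?_
      simp [lin, smul_eq_mul, ← hG]; ring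
    · have e1 : |(-(A * B * gA + B * G))| ≤ 1 * (3/4) + 1 * (1/2) := by
        rw [abs_neg]; exact abs_add_le (abs_mul_le hAB hgAb) (abs_mul_le h2 hGb)
      have e2 : |(-(A * B * gB + A * G))| ≤ 1 * (3/4) + 1 * (1/2) := by
        rw [abs_neg]; exact abs_add_le (abs_mul_le hAB hgBb) (abs_mul_le h1 hGb)
      simp only [lin_apply, mul_one, mul_zero, add_zero, zero_add]
      linarith
  · -- (0,2) : w.1 * cfun w
    refine ⟨lin (A * cA + C) (A * cB), ?_, ?_⟩
    · refine hfd_congr (hfst.mul hc) ?_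
      refine ContinuousLinearMap.ext fun v => ?_
      simp [lin, smul_eq_mul, ← hC]; ring
    · have e1 : |A * cA + C| ≤ 1 * 1 + 1 := abs_add_le (abs_mul_le h1 hcAb) hCb
      have e2 : |A * cB| ≤ 1 * 1 := abs_mul_le h1 hcBb
      simp only [lin_apply, mul_one, mul_zero, add_zero, zero_add]
      linarith
  · -- (1,0) : -(w.1 * w.2 * gfun w)
    refine ⟨lin (-(A * B * gA + B * G)) (-(A * B * gB + A * G)), ?_, ?_⟩
    · refine hfd_congr ((hfst.mul hsnd).mul hg).neg ?_
      refine ContinuousLinearMap.ext fun v => ?_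
      simp [lin, smul_eq_mul, ← hG]; ring
    · have e1 : |(-(A * B * gA + B * G))| ≤ 1 * (3/4) + 1 * (1/2) := by
        rw [abs_neg]; exact abs_add_le (abs_mul_le hAB hgAb) (abs_mul_le h2 hGb)
      have e2 : |(-(A * B * gB + A * G))| ≤ 1 * (3/4) + 1 * (1/2) := by
        rw [abs_neg]; exact abs_add_le (abs_mul_le hAB hgBb) (abs_mul_le h1 hGb)
      simp only [lin_apply, mul_one, mul_zero, add_zero, zero_add]
      linarith
  · -- (1,1) : 1 - w.2^2 * gfun w
    refine ⟨lin (-(B ^ 2 * gA)) (-(B ^ 2 * gB + 2 * B * G)), ?_, ?_⟩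
    · refine hfd_congr ((hasFDerivAt_const (1:ℝ) u).sub (hsq2.mul hg)) ?_
      refine ContinuousLinearMap.ext fun v => ?_
      simp [lin, smul_eq_mul, ← hG]; ring
    · have e1 : |(-(B ^ 2 * gA))| ≤ 1 * (3/4) := by
        rw [abs_neg]; exact abs_mul_le hB2 hgAb
      have e2 : |(-(B ^ 2 * gB + 2 * B * G))| ≤ 1 * (3/4) + 2 * (1/2) := by
        rw [abs_neg]; exact abs_add_le (abs_mul_le hB2 hgBb) (abs_mul_le h2B hGb)
      simp only [lin_apply, mul_one, mul_zero, add_zero, zero_add]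
      linarith
  · -- (1,2) : w.2 * cfun w
    refine ⟨lin (B * cA) (B * cB + C), ?_, ?_⟩
    · refine hfd_congr (hsnd.mul hc) ?_
      refine ContinuousLinearMap.ext fun v => ?_
      simp [lin, smul_eq_mul, ← hC]; ring
    · have e1 : |B * cA| ≤ 1 * 1 := abs_mul_le h2 hcAb
      have e2 : |B * cB + C| ≤ 1 * 1 + 1 := abs_add_le (abs_mul_le h2 hcBb) hCb
      simp only [lin_apply, mul_one, mul_zero, add_zero, zero_add]
      linarith
  · -- (2,0) : -(w.1 * cfun w)
    refine ⟨lin (-(A * cA + C)) (-(A * cB)), ?_, ?_⟩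
    · refine hfd_congr (hfst.mul hc).neg ?_
      refine ContinuousLinearMap.ext fun v => ?_
      simp [lin, smul_eq_mul, ← hC]; ring
    · have e1 : |(-(A * cA + C))| ≤ 1 * 1 + 1 := by
        rw [abs_neg]; exact abs_add_le (abs_mul_le h1 hcAb) hCb
      have e2 : |(-(A * cB))| ≤ 1 * 1 := by rw [abs_neg]; exact abs_mul_le h1 hcBb
      simp only [lin_apply, mul_one, mul_zero, add_zero, zero_add]
      linarith
  · -- (2,1) : -(w.2 * cfun w)
    refine ⟨lin (-(B * cA)) (-(B * cB + C)), ?_, ?_⟩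
    · refine hfd_congr (hsnd.mul hc).neg ?_
      refine ContinuousLinearMap.ext fun v => ?_
      simp [lin, smul_eq_mul, ← hC]; ring
    · have e1 : |(-(B * cA))| ≤ 1 * 1 := by rw [abs_neg]; exact abs_mul_le h2 hcAb
      have e2 : |(-(B * cB + C))| ≤ 1 * 1 + 1 := by
        rw [abs_neg]; exact abs_add_le (abs_mul_le h2 hcBb) hCb
      simp only [lin_apply, mul_one, mul_zero, add_zero, zero_add]
      linarith
  · -- (2,2) : cfun w
    refine ⟨lin cA cB, hc, ?_⟩
    simp only [lin_apply, mul_one, mul_zero, add_zero, zero_add]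
    linarith


lemma entry_le (φ : E2 → ℝ) (M : ℝ) (hM : ∀ x : E2, ‖fderiv ℝ (fderiv ℝ φ) x‖ ≤ M)
    (p : E2) (i j : Fin 2) :
    |fderiv ℝ (fderiv ℝ φ) p (EuclideanSpace.single i 1) (EuclideanSpace.single j 1)|
      ≤ c2C φ := by
  have hkey : ∀ (x : E2) (i' j' : Fin 2),
      |fderiv ℝ (fderiv ℝ φ) x (EuclideanSpace.single i' 1) (EuclideanSpace.single j' 1)| ≤ M := by
    intro x i' j'
    have h1 := (fderiv ℝ (fderiv ℝ φ) x (EuclideanSpace.single i' 1)).le_opNorm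
      (EuclideanSpace.single j' 1)
    have h2 := (fderiv ℝ (fderiv ℝ φ) x).le_opNorm (EuclideanSpace.single i' 1)
    have e1 : ‖(EuclideanSpace.single j' (1:ℝ) : E2)‖ = 1 := by
      rw [EuclideanSpace.norm_single]; exact norm_one
    have e2 : ‖(EuclideanSpace.single i' (1:ℝ) : E2)‖ = 1 := by
      rw [EuclideanSpace.norm_single]; exact norm_one
    rw [e1, mul_one] at h1
    rw [e2, mul_one] at h2
    rw [← Real.norm_eq_abs]
    exact h1.trans (h2.trans (hM x))
  have step1 : |fderiv ℝ (fderiv ℝ φ) p (EuclideanSpace.single i 1) (EuclideanSpace.single j 1)|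
      ≤ ⨆ j' : Fin 2, |fderiv ℝ (fderiv ℝ φ) p (EuclideanSpace.single i 1)
        (EuclideanSpace.single j' 1)| :=
    le_ciSup (f := fun j' : Fin 2 => |fderiv ℝ (fderiv ℝ φ) p (EuclideanSpace.single i 1)
      (EuclideanSpace.single j' 1)|) (Set.Finite.bddAbove (Set.finite_range _)) j
  have step2 : (⨆ j' : Fin 2, |fderiv ℝ (fderiv ℝ φ) p (EuclideanSpace.single i 1)
        (EuclideanSpace.single j' 1)|)
      ≤ ⨆ i' : Fin 2, ⨆ j' : Fin 2, |fderiv ℝ (fderiv ℝ φ) p (EuclideanSpace.single i' 1)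
        (EuclideanSpace.single j' 1)| :=
    le_ciSup (f := fun i' : Fin 2 => ⨆ j' : Fin 2, |fderiv ℝ (fderiv ℝ φ) p
      (EuclideanSpace.single i' 1) (EuclideanSpace.single j' 1)|)
      (Set.Finite.bddAbove (Set.finite_range _)) i
  have step3 : (⨆ i' : Fin 2, ⨆ j' : Fin 2, |fderiv ℝ (fderiv ℝ φ) p
        (EuclideanSpace.single i' 1) (EuclideanSpace.single j' 1)|) ≤ c2C φ := by
    rw [c2C]
    refine le_ciSup (f := fun x : E2 => ⨆ i' : Fin 2, ⨆ j' : Fin 2, |fderiv ℝ (fderiv ℝ φ) x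
      (EuclideanSpace.single i' 1) (EuclideanSpace.single j' 1)|) ⟨M, ?_⟩ p
    rintro _ ⟨x, rfl⟩
    exact ciSup_le fun i' => ciSup_le fun j' => hkey x i' j'
  exact step1.trans (step2.trans step3)

/- ### `proj2` as a continuous linear map -/

def proj2Lm : E3 →ₗ[ℝ] E2 where
  toFun := proj2
  map_add' := by
    intro x y
    ext i
    fin_cases i <;> simp [proj2]
  map_smul' := by
    intro c x
    ext i
    fin_cases i <;> simp [proj2]

def proj2L : E3 →L[ℝ] E2 := LinearMap.toContinuousLinearMap proj2Lm

lemma proj2_single0 :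
    proj2 (EuclideanSpace.single (0 : Fin 3) (1:ℝ)) = EuclideanSpace.single (0 : Fin 2) 1 := by
  ext i; fin_cases i <;> simp [proj2, EuclideanSpace.single_apply]

lemma proj2_single1 :
    proj2 (EuclideanSpace.single (1 : Fin 3) (1:ℝ)) = EuclideanSpace.single (1 : Fin 2) 1 := by
  ext i; fin_cases i <;> simp [proj2, EuclideanSpace.single_apply]

lemma proj2_single2 :
    proj2 (EuclideanSpace.single (2 : Fin 3) (1:ℝ)) = 0 := by
  ext i; fin_cases i <;> simp [proj2, EuclideanSpace.single_apply]

end Stmt10Aux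


/-- If `φ ∈ C²(ℝ²,ℝ)`, `φ(0) = 0`, `∇φ(0) = 0`, `Lip(φ) ≤ 1` (and the
second derivatives of `φ` are bounded, so that `‖φ‖_{C²}` is a genuine supremum), then every
partial derivative of every entry of `x ↦ Q(x) = Q(x¹,x²,φ(x¹,x²))` on `Ω_φ` is bounded by
`6 ‖φ‖_{C²}`. -/
theorem stmt10 (φ : E2 → ℝ) (hC2 : ContDiff ℝ 2 φ) (h0 : φ 0 = 0)
    (h0' : fderiv ℝ φ 0 = 0) (hlip : LipschitzWith 1 φ)
    (hbdd : ∃ M : ℝ, ∀ x : E2, ‖fderiv ℝ (fderiv ℝ φ) x‖ ≤ M) :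
    ∀ x ∈ Ωset φ, ∀ i j k : Fin 3,
      |fderiv ℝ (fun y : E3 => Qmat φ (proj2 y) i j) x (EuclideanSpace.single k 1)| ≤
        6 * c2C φ := by
  classical
  obtain ⟨M, hM⟩ := hbdd
  intro x hx i j k
  set p : E2 := proj2 x with hp
  have hc2nn : 0 ≤ c2C φ := (abs_nonneg _).trans (Stmt10Aux.entry_le φ M hM 0 0 0)
  have hgrad : ∀ w : E2, ‖fderiv ℝ φ w‖ ≤ 1 := fun w => by
    simpa using norm_fderiv_le_of_lipschitz ℝ hlip (x₀ := w)
  have hone : ∀ (w : E2) (i' : Fin 2), |fderiv ℝ φ w (EuclideanSpace.single i' 1)| ≤ 1 := by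
    intro w i'
    have h1 := (fderiv ℝ φ w).le_opNorm (EuclideanSpace.single i' 1)
    have e : ‖(EuclideanSpace.single i' (1:ℝ) : E2)‖ = 1 := by
      rw [EuclideanSpace.norm_single]; exact norm_one
    rw [e, mul_one, Real.norm_eq_abs] at h1
    exact h1.trans (hgrad w)
  have hC1 : ContDiff ℝ 1 (fderiv ℝ φ) := hC2.fderiv_right (by norm_num)
  have hdiff : Differentiable ℝ (fderiv ℝ φ) := hC1.differentiable one_ne_zero
  have hproj : HasFDerivAt proj2 Stmt10Aux.proj2L x := Stmt10Aux.proj2L.hasFDerivAt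
  set H := fderiv ℝ (fderiv ℝ φ) p with hHdef
  have hH : HasFDerivAt (fderiv ℝ φ) H p := (hdiff p).hasFDerivAt
  set A0 : (E2 →L[ℝ] ℝ) →L[ℝ] ℝ :=
    ContinuousLinearMap.apply ℝ ℝ (EuclideanSpace.single (0 : Fin 2) 1) with hA0
  set A1 : (E2 →L[ℝ] ℝ) →L[ℝ] ℝ :=
    ContinuousLinearMap.apply ℝ ℝ (EuclideanSpace.single (1 : Fin 2) 1) with hA1
  have hcomp : HasFDerivAt (fun y : E3 => fderiv ℝ φ (proj2 y)) (H.comp Stmt10Aux.proj2L) x :=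
    hH.comp x hproj
  have h0d : HasFDerivAt (fun y : E3 => fderiv ℝ φ (proj2 y) (EuclideanSpace.single 0 1))
      (A0.comp (H.comp Stmt10Aux.proj2L)) x := A0.hasFDerivAt.comp x hcomp
  have h1d : HasFDerivAt (fun y : E3 => fderiv ℝ φ (proj2 y) (EuclideanSpace.single 1 1))
      (A1.comp (H.comp Stmt10Aux.proj2L)) x := A1.hasFDerivAt.comp x hcomp
  set G : E3 → ℝ × ℝ := fun y =>
    (fderiv ℝ φ (proj2 y) (EuclideanSpace.single 0 1),
     fderiv ℝ φ (proj2 y) (EuclideanSpace.single 1 1)) with hGdef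
  set DG : E3 →L[ℝ] ℝ × ℝ :=
    (A0.comp (H.comp Stmt10Aux.proj2L)).prod (A1.comp (H.comp Stmt10Aux.proj2L)) with hDG
  have hG : HasFDerivAt G DG x := h0d.prodMk h1d
  obtain ⟨L, hL, hLb⟩ := Stmt10Aux.key (G x) (hone p 0) (hone p 1) i j
  have hfun : (fun y : E3 => Qmat φ (proj2 y) i j)
      = fun y => Stmt10Aux.Fmat (G y) i j := by
    funext y
    rw [Stmt10Aux.Qmat_eq φ (proj2 y)]
    rfl
  have hci : HasFDerivAt (fun y : E3 => Stmt10Aux.Fmat (G y) i j) (L.comp DG) x :=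
    hL.comp x hG
  rw [hfun, hci.fderiv, ContinuousLinearMap.comp_apply]
  set v : ℝ × ℝ := DG (EuclideanSpace.single k 1) with hv
  have hvb : ‖v‖ ≤ c2C φ := by
    have hv1 : v.1 = H (proj2 (EuclideanSpace.single k 1)) (EuclideanSpace.single 0 1) := rfl
    have hv2 : v.2 = H (proj2 (EuclideanSpace.single k 1)) (EuclideanSpace.single 1 1) := rfl
    have hnorm : ‖v‖ = max ‖v.1‖ ‖v.2‖ := rfl
    rw [hnorm, hv1, hv2]
    rcases (show k = 0 ∨ k = 1 ∨ k = 2 by omega) with rfl | rfl | rfl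
    · rw [Stmt10Aux.proj2_single0]
      refine max_le ?_ ?_ <;> rw [Real.norm_eq_abs] <;>
        exact Stmt10Aux.entry_le φ M hM p _ _
    · rw [Stmt10Aux.proj2_single1]
      refine max_le ?_ ?_ <;> rw [Real.norm_eq_abs] <;>
        exact Stmt10Aux.entry_le φ M hM p _ _
    · rw [Stmt10Aux.proj2_single2]
      simp only [map_zero, ContinuousLinearMap.zero_apply, norm_zero, max_self]
      exact hc2nn
  calc |L v| ≤ (|L (1, 0)| + |L (0, 1)|) * ‖v‖ := Stmt10Aux.pair_bound L v
    _ ≤ 6 * c2C φ :=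
      mul_le_mul hLb hvb (norm_nonneg _) (by norm_num)
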